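/- arXiv:q-alg/9503003 — 4 statements merged into one kernel-verified Lean document; each statement's English description precedes it below -/
import Mathlib

section
/- Let 𝔩 be a finite-dimensional Lie algebra with subalgebras 𝔥 and 𝔫 such that 𝔩 = 𝔥 ⊕ 𝔫 as vector spaces. Identify 𝔫* with the annihilator 𝔥⁰ = {f ∈ 𝔩* : f|_𝔥 = 0} ⊂ 𝔩*, and accordingly identify ∧ᵏ𝔫* with a subspace of ∧ᵏ𝔩*. If f ∈ ∧ᵏ𝔫* is 𝔥-invariant (for the action of 𝔥 on 𝔫* dual to the projection of ad to 𝔫), then the Chevalley–Eilenberg differential of 𝔩 applied to the extension f̄ of f equals the extension of the Chevalley–Eilenberg differential of the Lie algebra 𝔫 applied to f: d_𝔩 f̄ = (d_𝔫 f)‾. -/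
/-- Skipping two indices `i < j`. -/
def skip2 (i j m : ℕ) : ℕ := if m < i then m else if m + 1 < j then m + 1 else m + 2

theorem skip2_le (i j m : ℕ) : skip2 i j m ≤ m + 2 := by
  unfold skip2; split_ifs <;> omega

/-- The Chevalley–Eilenberg differential with trivial coefficients on `k`-cochains:
`(d g)(a₁,…,a_{k+1}) = Σ_{i<j} (−1)^{i+j} g([a_i,a_j], a₁,…,â_i,…,â_j,…,a_{k+1})`. -/
noncomputable def ceDiff (K : Type*) [Field K] {M : Type*} [LieRing M] (k : ℕ)
    (f : (Fin k → M) → K) : (Fin (k + 1) → M) → K :=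
  fun a => ∑ i : Fin (k + 1), ∑ j : Fin (k + 1),
    if (i : ℕ) < (j : ℕ) then
      ((-1 : K)) ^ ((i : ℕ) + (j : ℕ)) *
        f (fun m =>
          if hm : (m : ℕ) = 0 then ⁅a i, a j⁆
          else a ⟨skip2 (i : ℕ) (j : ℕ) ((m : ℕ) - 1), by
            have h1 := skip2_le (i : ℕ) (j : ℕ) ((m : ℕ) - 1)
            have h2 := m.isLt
            omega⟩)
    else 0

/-- The projection `π_𝔫 : 𝔩 → 𝔫` along `𝔥`, for a vector space decomposition `𝔩 = 𝔥 ⊕ 𝔫`. -/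
noncomputable def projN {K : Type*} [Field K] {L : Type*} [LieRing L] [LieAlgebra K L]
    (h n : LieSubalgebra K L) (hc : IsCompl h.toSubmodule n.toSubmodule) (z : L) : n :=
  ⟨(Submodule.linearProjOfIsCompl n.toSubmodule h.toSubmodule hc.symm z : L),
   (Submodule.linearProjOfIsCompl n.toSubmodule h.toSubmodule hc.symm z).2⟩

/-- The action of `x ∈ 𝔩` (in practice `x ∈ 𝔥`) on `𝔫`: `x·ξ = π_𝔫 ⁅x, ξ⁆`. -/
noncomputable def hAct {K : Type*} [Field K] {L : Type*} [LieRing L] [LieAlgebra K L]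
    (h n : LieSubalgebra K L) (hc : IsCompl h.toSubmodule n.toSubmodule)
    (x : L) (ξ : n) : n :=
  projN h n hc ⁅x, (ξ : L)⁆

/-!
Write `y = π_𝔫 ∘ a` and `x_i = a_i - y_i ∈ 𝔥`. Since `𝔥` and `𝔫` are subalgebras,
`π_𝔫 ⁅a_i, a_j⁆ = ⁅y_i, y_j⁆ + x_i·y_j - x_j·y_i`, so `d_𝔩 f̄ (a) - d_𝔫 f (y)` is the sum over
`i < j` of `±(f(x_i·y_j, …) - f(x_j·y_i, …))`. Moving the entry `x_i·y_j` from the front to the slot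
that `y_j` occupies among the `y`'s other than `y_i` regroups these terms, for each fixed `i`, into
`(-1)^(i+1) ∑_p f(y_{≠i} with x_i acting on its p-th entry)`, which vanishes by `𝔥`-invariance.
-/

open Fin Function

def skipTwo {k : ℕ} (i j : Fin (k + 2)) (m : Fin k) : Fin (k + 2) :=
  ⟨skip2 i j m, by have := skip2_le i j m; omega⟩

theorem skipTwo_castSucc_of_lt {k : ℕ} {i : Fin (k + 2)} {p : Fin (k + 1)} (hp : p.castSucc < i) :
    skipTwo p.castSucc i = i.succAbove ∘ p.succAbove := by
  funext m
  rw [Fin.lt_def, val_castSucc] at hp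
  ext
  simp only [skipTwo, skip2, comp_apply, val_castSucc, succAbove, Fin.lt_def]
  split_ifs <;> simp_all <;> omega

theorem skipTwo_succ_of_le {k : ℕ} {i : Fin (k + 2)} {p : Fin (k + 1)} (hp : i ≤ p.castSucc) :
    skipTwo i p.succ = i.succAbove ∘ p.succAbove := by
  funext m
  rw [Fin.le_def, val_castSucc] at hp
  ext
  simp only [skipTwo, skip2, comp_apply, val_castSucc, succAbove, Fin.lt_def, val_succ]
  split_ifs <;> simp_all <;> omega

theorem ceDiff_succ {K : Type*} [Field K] {M : Type*} [LieRing M] (k : ℕ)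
    (f : (Fin (k + 1) → M) → K) (a : Fin (k + 2) → M) :
    ceDiff K (k + 1) f a = ∑ i : Fin (k + 2), ∑ j : Fin (k + 2), if i < j then
      (-1 : K) ^ ((i : ℕ) + j) * f (Matrix.vecCons ⁅a i, a j⁆ (a ∘ skipTwo i j)) else 0 := by
  simp only [ceDiff, Fin.lt_def]
  refine Finset.sum_congr rfl fun i _ => Finset.sum_congr rfl fun j _ => ?_
  congr 3
  funext m
  cases m using Fin.cases <;> rfl

namespace AlternatingMap

variable {R M N : Type*} [CommRing R] [AddCommGroup M] [Module R M] [AddCommGroup N] [Module R N]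
  {k : ℕ}

theorem succAbove_pair_terms_eq_smul_map_update (f : M [⋀^Fin (k + 1)]→ₗ[R] N) (y : Fin (k + 2) → M)
    (i : Fin (k + 2)) (p : Fin (k + 1)) (x : M) :
    (if i < i.succAbove p then
        (-1 : ℤ) ^ ((i : ℕ) + i.succAbove p) • f (Matrix.vecCons x (y ∘ skipTwo i (i.succAbove p)))
      else 0) -
      (if i.succAbove p < i then
        (-1 : ℤ) ^ ((i.succAbove p : ℕ) + i) • f (Matrix.vecCons x (y ∘ skipTwo (i.succAbove p) i))
      else 0) =
    (-1 : ℤ) ^ ((i : ℕ) + 1) • f (update (i.removeNth y) p x) := by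
  rw [← insertNth_removeNth, map_insertNth, smul_smul]
  rcases lt_or_ge p.castSucc i with hp | hp
  · rw [succAbove_of_castSucc_lt _ _ hp, if_neg (lt_asymm hp), if_pos hp,
      skipTwo_castSucc_of_lt hp, zero_sub, ← neg_smul, val_castSucc]
    congr 1
    ring
  · have hlt : i < p.succ := hp.trans_lt castSucc_lt_succ
    rw [succAbove_of_le_castSucc _ _ hp, if_pos hlt, if_neg (lt_asymm hlt), skipTwo_succ_of_le hp,
      sub_zero, val_succ]
    congr 1
    ring

theorem sum_lt_smul_map_vecCons_sub (f : M [⋀^Fin (k + 1)]→ₗ[R] N) (y : Fin (k + 2) → M)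
    (w : Fin (k + 2) → Fin (k + 2) → M) :
    ∑ i : Fin (k + 2), ∑ j : Fin (k + 2), (if i < j then (-1 : ℤ) ^ ((i : ℕ) + j) •
        (f (Matrix.vecCons (w i j) (y ∘ skipTwo i j)) -
          f (Matrix.vecCons (w j i) (y ∘ skipTwo i j))) else 0) =
    ∑ i : Fin (k + 2), (-1 : ℤ) ^ ((i : ℕ) + 1) •
      ∑ p : Fin (k + 1), f (update (i.removeNth y) p (w i (i.succAbove p))) := by
  calc _ = (∑ i : Fin (k + 2), ∑ j : Fin (k + 2), if i < j then
          (-1 : ℤ) ^ ((i : ℕ) + j) • f (Matrix.vecCons (w i j) (y ∘ skipTwo i j)) else 0) -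
        ∑ j : Fin (k + 2), ∑ i : Fin (k + 2), if i < j then
          (-1 : ℤ) ^ ((i : ℕ) + j) • f (Matrix.vecCons (w j i) (y ∘ skipTwo i j)) else 0 := by
        rw [Finset.sum_comm (γ := Fin (k + 2)) (f := fun j i => if i < j then _ else _),
          ← Finset.sum_sub_distrib]
        refine Finset.sum_congr rfl fun i _ => ?_
        rw [← Finset.sum_sub_distrib]
        refine Finset.sum_congr rfl fun j _ => ?_
        split_ifs <;> simp [smul_sub]
    _ = ∑ i : Fin (k + 2), ∑ p : Fin (k + 1),
          ((if i < i.succAbove p then (-1 : ℤ) ^ ((i : ℕ) + i.succAbove p) •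
            f (Matrix.vecCons (w i (i.succAbove p)) (y ∘ skipTwo i (i.succAbove p))) else 0) -
          (if i.succAbove p < i then (-1 : ℤ) ^ ((i.succAbove p : ℕ) + i) •
            f (Matrix.vecCons (w i (i.succAbove p)) (y ∘ skipTwo (i.succAbove p) i)) else 0)) := by
        rw [← Finset.sum_sub_distrib]
        refine Finset.sum_congr rfl fun i _ => ?_
        rw [← Finset.sum_sub_distrib, Fin.sum_univ_succAbove _ i]
        simp
    _ = _ := by
        simp_rw [succAbove_pair_terms_eq_smul_map_update, Finset.smul_sum]

end AlternatingMap

section Projection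

variable {K L : Type*} [Field K] [LieRing L] [LieAlgebra K L] {h n : LieSubalgebra K L}
  (hc : IsCompl h.toSubmodule n.toSubmodule)

local notation "π" => projN h n hc

theorem projN_add (u v : L) : π (u + v) = π u + π v :=
  Subtype.ext (by simp [projN])

theorem projN_sub (u v : L) : π (u - v) = π u - π v :=
  Subtype.ext (by simp [projN])

theorem projN_of_mem_right {w : L} (hw : w ∈ n) : π w = ⟨w, hw⟩ :=
  Subtype.ext (congrArg Subtype.val (Submodule.projectionOnto_apply_left hc.symm ⟨w, hw⟩))

theorem projN_of_mem_left {w : L} (hw : w ∈ h) : π w = 0 :=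
  Subtype.ext (congrArg Subtype.val (Submodule.projectionOnto_apply_of_mem_right hc.symm hw))

theorem sub_projN_mem (w : L) : w - (π w : L) ∈ h := by
  have hcompl : (π w : L) = w - h.toSubmodule.projection n.toSubmodule hc w :=
    Submodule.projection_eq_self_sub_projection hc w
  rw [hcompl, sub_sub_cancel]
  exact Submodule.projection_apply_mem hc w

theorem projN_lie (u v : L) :
    π ⁅u, v⁆ = ⁅π u, π v⁆ + (hAct h n hc (u - π u) (π v) - hAct h n hc (v - π v) (π u)) := by
  set xu := u - (π u : L)
  set xv := v - (π v : L)
  have hbracket : ⁅u, v⁆ = ⁅xu, xv⁆ + (⁅(π u : L), (π v : L)⁆ +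
      (⁅xu, (π v : L)⁆ - ⁅xv, (π u : L)⁆)) := by
    conv_lhs => rw [← sub_add_cancel u (π u : L), ← sub_add_cancel v (π v : L)]
    rw [add_lie, lie_add, lie_add, ← lie_skew xv]
    abel
  rw [hbracket, projN_add, projN_add, projN_sub,
    projN_of_mem_left hc (h.lie_mem (sub_projN_mem hc u) (sub_projN_mem hc v)),
    projN_of_mem_right hc (n.lie_mem (π u).2 (π v).2), zero_add]
  rfl

theorem map_projN_vecCons_lie {N : Type*} [AddCommGroup N] [Module K N] {k : ℕ}
    (f : n [⋀^Fin (k + 1)]→ₗ[K] N) (u v : L) (t : Fin k → L) :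
    f (fun m => π (Matrix.vecCons ⁅u, v⁆ t m)) =
      f (Matrix.vecCons ⁅π u, π v⁆ (π ∘ t)) +
        (f (Matrix.vecCons (hAct h n hc (u - π u) (π v)) (π ∘ t)) -
          f (Matrix.vecCons (hAct h n hc (v - π v) (π u)) (π ∘ t))) := by
  have hcomp : (fun m => π (Matrix.vecCons ⁅u, v⁆ t m)) = Matrix.vecCons (π ⁅u, v⁆) (π ∘ t) :=
    comp_cons π ⁅u, v⁆ t
  rw [hcomp, projN_lie]
  change f.curryLeft (_ + (_ - _)) (π ∘ t) = _
  rw [map_add, map_sub]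
  rfl

end Projection

theorem ce_differential_commutes_with_extension
    {K : Type*} [Field K] {L : Type*} [LieRing L] [LieAlgebra K L]
    (h n : LieSubalgebra K L)
    (hc : IsCompl h.toSubmodule n.toSubmodule)
    (k : ℕ) (f : AlternatingMap K n K (Fin k))
    -- `f` is `𝔥`-invariant
    (hinv : ∀ x ∈ h, ∀ y : Fin k → n,
      ∑ i : Fin k, f (Function.update y i (hAct h n hc x (y i))) = 0) :
    ∀ a : Fin (k + 1) → L,
      ceDiff K k (fun b : Fin k → L => f (fun i => projN h n hc (b i))) a =
        ceDiff K k (⇑f) (fun i => projN h n hc (a i)) := by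
  rcases k with _ | k
  · intro a
    simp [ceDiff]
  intro a
  have hcorrection := (f.sum_lt_smul_map_vecCons_sub (projN h n hc ∘ a) fun i j =>
    hAct h n hc (a i - projN h n hc (a i)) (projN h n hc (a j))).trans
      (Finset.sum_eq_zero fun i _ => smul_eq_zero_of_right _
        (hinv _ (sub_projN_mem hc (a i)) (i.removeNth (projN h n hc ∘ a))))
  rw [ceDiff_succ, ceDiff_succ, ← sub_eq_zero, ← Finset.sum_sub_distrib]
  refine Eq.trans ?_ hcorrection
  refine Finset.sum_congr rfl fun i _ => ?_
  rw [← Finset.sum_sub_distrib]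
  refine Finset.sum_congr rfl fun j _ => ?_
  split_ifs
  · simp only [map_projN_vecCons_lie, zsmul_eq_mul, comp_def]
    push_cast
    ring
  · rw [sub_zero]
end

section
/- Let 𝔩 be a finite-dimensional Lie algebra with subalgebras 𝔥 and 𝔫 such that 𝔩 = 𝔥 ⊕ 𝔫 as vector spaces. Then the subspace (∧𝔫*)^𝔥 of 𝔥-invariant elements of ∧𝔫* is invariant under the Chevalley–Eilenberg coboundary operator d_𝔫 of the Lie algebra 𝔫, even though the action of 𝔥 on 𝔫 need not be by Lie algebra derivations. -/
open Function

namespace Fin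

theorem sum_sum_ite_lt_add_swap {β : Type*} [AddCommMonoid β] {m : ℕ}
    (G : Fin (m + 1) → Fin (m + 1) → β) :
    ∑ i, ∑ j, (if i < j then G i j + G j i else 0) = ∑ i, ∑ q, G i (i.succAbove q) := by
  have hswap : ∑ i, ∑ j, (if i < j then G j i else 0) = ∑ i, ∑ j, (if j < i then G i j else 0) :=
    Finset.sum_comm
  have hne : ∀ i j : Fin (m + 1),
      (if i < j then G i j else 0) + (if j < i then G i j else 0) = if i ≠ j then G i j else 0 := by
    intro i j
    rcases lt_trichotomy i j with hij | rfl | hji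
    · simp [hij, hij.ne, hij.not_gt]
    · simp
    · simp [hji, hji.ne', hji.not_gt]
  calc ∑ i, ∑ j, (if i < j then G i j + G j i else 0)
      = ∑ i, ∑ j, ((if i < j then G i j else 0) + (if i < j then G j i else 0)) := by
        simp only [ite_add_zero]
    _ = ∑ i, ∑ j, (if i ≠ j then G i j else 0) := by
        simp only [Finset.sum_add_distrib, hswap, ← hne]
    _ = ∑ i, ∑ q, G i (i.succAbove q) := by
        refine Finset.sum_congr rfl fun i _ => ?_
        simp [Fin.sum_univ_succAbove _ i, (Fin.succAbove_ne i _).symm]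

end Fin

namespace AlternatingMap

theorem map_cons_add {R M N : Type*} [CommSemiring R] [AddCommMonoid M] [Module R M]
    [AddCommMonoid N] [Module R N] {k : ℕ} (g : M [⋀^Fin (k + 1)]→ₗ[R] N) (a b : M)
    (t : Fin k → M) :
    g (Fin.cons (a + b) t) = g (Fin.cons a t) + g (Fin.cons b t) := by
  change g.curryLeft (a + b) t = g.curryLeft a t + g.curryLeft b t
  rw [map_add]; rfl

variable {R M N : Type*} [CommRing R] [AddCommGroup M] [Module R M] [AddCommGroup N] [Module R N]
  {k : ℕ} (g : M [⋀^Fin (k + 1)]→ₗ[R] N)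

theorem map_cons_sub (a b : M) (t : Fin k → M) :
    g (Fin.cons (a - b) t) = g (Fin.cons a t) - g (Fin.cons b t) := by
  change g.curryLeft (a - b) t = g.curryLeft a t - g.curryLeft b t
  rw [map_sub]; rfl

theorem map_cons_removeNth (q : Fin (k + 1)) (b : M) (z : Fin (k + 1) → M) :
    g (Fin.cons b (q.removeNth z)) = (-1) ^ (q : ℕ) • g (update z q b) := by
  rw [← Fin.insertNth_removeNth]
  exact (g.neg_one_pow_smul_map_insertNth q b _).symm

end AlternatingMap

theorem ceDiff_succ_apply (K : Type*) [Field K] {M : Type*} [LieRing M] (k : ℕ)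
    (g : (Fin (k + 1) → M) → K) (a : Fin (k + 2) → M) :
    ceDiff K (k + 1) g a = ∑ i : Fin (k + 2), ∑ j : Fin (k + 2), if hij : i < j then
      (-1) ^ ((i : ℕ) + j) *
        g (Fin.cons ⁅a i, a j⁆ ((i.castPred (Fin.ne_last_of_lt hij)).removeNth (j.removeNth a)))
      else 0 := by
  refine Finset.sum_congr rfl fun i _ => Finset.sum_congr rfl fun j _ => ?_
  by_cases hij : i < j
  · rw [if_pos (Fin.lt_def.mp hij), dif_pos hij]
    congr 2
    funext m
    refine Fin.cases (by simp) (fun m => ?_) m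
    rw [dif_neg (by simp), Fin.cons_succ]
    congr 1
    ext
    simp only [Fin.val_succ, Nat.add_sub_cancel, skip2, Fin.succAbove, Fin.lt_def,
      Fin.val_castSucc, Fin.coe_castPred]
    split_ifs <;> simp_all <;> omega
  · rw [if_neg (mt Fin.lt_def.mpr hij), dif_neg hij]

section Decomposition

variable {K : Type*} [Field K] {L : Type*} [LieRing L] [LieAlgebra K L]
  (h n : LieSubalgebra K L) (hc : IsCompl h.toSubmodule n.toSubmodule)

theorem projN_add_s5 (z w : L) : projN h n hc (z + w) = projN h n hc z + projN h n hc w := by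
  ext; simp [projN]

theorem projN_neg (z : L) : projN h n hc (-z) = -projN h n hc z := by
  ext; simp [projN]

theorem projN_coe (ξ : n) : projN h n hc ξ = ξ :=
  Subtype.ext (Submodule.projection_apply_of_mem_left hc.symm ξ.2)

theorem projN_lie_coe (ξ η : n) : projN h n hc ⁅(ξ : L), (η : L)⁆ = ⁅ξ, η⁆ :=
  projN_coe h n hc ⁅ξ, η⁆

/-- The `𝔥`-component of `⁅x, ξ⁆`; it is `-(ξ·x)` in the notation `⁅x, ξ⁆ = -ξ·x + x·ξ`. -/
noncomputable def hComponent (x : L) (ξ : n) : L := ⁅x, (ξ : L)⁆ - hAct h n hc x ξ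

theorem hComponent_mem (x : L) (ξ : n) : hComponent h n hc x ξ ∈ h := by
  refine (Submodule.projectionOnto_apply_eq_zero_iff hc.symm).mp ?_
  change projN h n hc (⁅x, (ξ : L)⁆ - projN h n hc ⁅x, (ξ : L)⁆) = 0
  rw [sub_eq_add_neg, projN_add_s5, projN_neg, projN_coe, add_neg_cancel]

theorem lie_eq_hComponent_add_hAct (x : L) (ξ : n) :
    ⁅x, (ξ : L)⁆ = hComponent h n hc x ξ + hAct h n hc x ξ :=
  (sub_add_cancel _ _).symm

/-- `x·` fails to be a derivation of `𝔫` only through the `𝔥`-components. -/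
theorem hAct_lie_defect (x : L) (ξ η : n) :
    ⁅hAct h n hc x ξ, η⁆ + ⁅ξ, hAct h n hc x η⁆ - hAct h n hc x ⁅ξ, η⁆ =
      hAct h n hc (hComponent h n hc x η) ξ - hAct h n hc (hComponent h n hc x ξ) η := by
  have hexpand : hAct h n hc x ⁅ξ, η⁆ = hAct h n hc (hComponent h n hc x ξ) η
      + ⁅hAct h n hc x ξ, η⁆ - hAct h n hc (hComponent h n hc x η) ξ
      + ⁅ξ, hAct h n hc x η⁆ := by
    rw [hAct, LieSubalgebra.coe_bracket, leibniz_lie, lie_eq_hComponent_add_hAct h n hc x ξ,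
      lie_eq_hComponent_add_hAct h n hc x η, add_lie, lie_add, ← lie_skew (ξ : L)]
    simp only [projN_add_s5, projN_neg, projN_lie_coe, hAct]
    abel
  rw [hexpand]
  abel

end Decomposition

theorem neg_one_pow_add_succ_mul_sub {R : Type*} [CommRing R] (a q : ℕ) (X Y : R) :
    (-1) ^ (a + (q + 1)) * ((-1) ^ a * X - (-1) ^ q * Y) = (-1) ^ a * Y + (-1) ^ (q + 1) * X := by
  have ha : (-1 : R) ^ (a + a) = 1 := Even.neg_one_pow ⟨a, rfl⟩
  have hq : (-1 : R) ^ (q + q) = 1 := Even.neg_one_pow ⟨q, rfl⟩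
  linear_combination ((-1) ^ (q + 1) * X) * ha + ((-1) ^ a * Y) * hq

section Invariance

variable {K : Type*} [Field K] {L : Type*} [LieRing L] [LieAlgebra K L]
  (h n : LieSubalgebra K L) (hc : IsCompl h.toSubmodule n.toSubmodule)
  {k : ℕ} (f : n [⋀^Fin (k + 1)]→ₗ[K] K)

theorem sum_update_hAct_cons_lie {x : L}
    (hfx : ∀ y : Fin (k + 1) → n, ∑ i, f (update y i (hAct h n hc x (y i))) = 0)
    (y : Fin (k + 2) → n) {i j : Fin (k + 2)} {i' : Fin (k + 1)} (hi : j.succAbove i' = i) :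
    ∑ p, (let y' := update y p (hAct h n hc x (y p))
      f (Fin.cons ⁅y' i, y' j⁆ (i'.removeNth (j.removeNth y')))) =
      f (Fin.cons (hAct h n hc (hComponent h n hc x (y j)) (y i) -
        hAct h n hc (hComponent h n hc x (y i)) (y j)) (i'.removeNth (j.removeNth y))) := by
  subst hi
  have hinv := hfx (Fin.cons ⁅y (j.succAbove i'), y j⁆ (i'.removeNth (j.removeNth y)))
  simp only [Fin.sum_univ_succ, Fin.update_cons_zero, Fin.cons_zero, Fin.cons_succ,
    ← Fin.cons_update, Fin.removeNth_apply] at hinv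
  rw [Fin.sum_univ_succAbove _ j, Fin.sum_univ_succAbove _ i', ← hAct_lie_defect,
    f.map_cons_sub, f.map_cons_add]
  simp only [ne_eq, Fin.succAbove_ne, not_false_eq_true, update_of_ne, update_self,
    Fin.removeNth_update, Fin.ne_succAbove, Fin.removeNth_update_succAbove, Fin.succAbove_inj]
  linear_combination hinv

/-- The term of `∑ r, (-1)^r (ηᵣ·f)(y without yᵣ)`, with `ηᵣ = hComponent x (y r)`, in which `ηᵣ`
acts on the slot of `y s`. -/
noncomputable def crossTerm (x : L) (y : Fin (k + 2) → n) (r s : Fin (k + 2)) : K :=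
  (-1) ^ (r : ℕ) * f (r.removeNth (update y s (hAct h n hc (hComponent h n hc x (y r)) (y s))))

theorem neg_one_pow_mul_sum_update_hAct_cons_lie {x : L}
    (hfx : ∀ y : Fin (k + 1) → n, ∑ i, f (update y i (hAct h n hc x (y i))) = 0)
    (y : Fin (k + 2) → n) {i j : Fin (k + 2)} (hij : i < j) :
    (-1) ^ ((i : ℕ) + j) * ∑ p, (let y' := update y p (hAct h n hc x (y p))
      f (Fin.cons ⁅y' i, y' j⁆ ((i.castPred (Fin.ne_last_of_lt hij)).removeNth (j.removeNth y')))) =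
      crossTerm h n hc f x y i j + crossTerm h n hc f x y j i := by
  rw [sum_update_hAct_cons_lie h n hc f hfx y (Fin.succAbove_castPred_of_lt _ _ hij),
    f.map_cons_sub]
  nth_rw 2 [Fin.removeNth_removeNth_eq_swap]
  rw [Fin.predAbove_castPred_of_lt _ _ hij, Fin.succAbove_castPred_of_lt _ _ hij,
    f.map_cons_removeNth, f.map_cons_removeNth, ← Fin.removeNth_update_succAbove,
    ← Fin.removeNth_update_succAbove, Fin.succAbove_castPred_of_lt _ _ hij,
    Fin.succAbove_pred_of_lt _ _ hij]
  have hj : (j : ℕ) = (j.pred (Fin.ne_zero_of_lt hij) : ℕ) + 1 := by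
    rw [Fin.val_pred]; have := Fin.lt_def.mp hij; omega
  simp only [crossTerm, Fin.coe_castPred, zsmul_eq_mul, Int.cast_pow, Int.cast_neg, Int.cast_one]
  rw [hj]
  exact neg_one_pow_add_succ_mul_sub _ _ _ _

theorem sum_ceDiff_update_hAct {x : L}
    (hfx : ∀ y : Fin (k + 1) → n, ∑ i, f (update y i (hAct h n hc x (y i))) = 0)
    (y : Fin (k + 2) → n) :
    ∑ p, ceDiff K (k + 1) f (update y p (hAct h n hc x (y p))) =
      ∑ i, ∑ j, if i < j then crossTerm h n hc f x y i j + crossTerm h n hc f x y j i else 0 := by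
  simp only [ceDiff_succ_apply]
  rw [Finset.sum_comm]
  refine Finset.sum_congr rfl fun i _ => ?_
  rw [Finset.sum_comm]
  refine Finset.sum_congr rfl fun j _ => ?_
  by_cases hij : i < j
  · simp only [dif_pos hij, if_pos hij]
    rw [← Finset.mul_sum]
    exact neg_one_pow_mul_sum_update_hAct_cons_lie h n hc f hfx y hij
  · simp only [dif_neg hij, if_neg hij, Finset.sum_const_zero]

theorem sum_crossTerm_succAbove_eq_zero
    (hf : ∀ x ∈ h, ∀ y : Fin (k + 1) → n, ∑ i, f (update y i (hAct h n hc x (y i))) = 0)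
    (x : L) (y : Fin (k + 2) → n) (r : Fin (k + 2)) :
    ∑ q, crossTerm h n hc f x y r (r.succAbove q) = 0 := by
  simp only [crossTerm, Fin.removeNth_update_succAbove, ← Finset.mul_sum]
  exact mul_eq_zero_of_right _ (hf _ (hComponent_mem h n hc x (y r)) (r.removeNth y))

end Invariance

theorem ce_differential_preserves_h_invariants
    {K : Type*} [Field K] {L : Type*} [LieRing L] [LieAlgebra K L]
    (h n : LieSubalgebra K L)
    (hc : IsCompl h.toSubmodule n.toSubmodule)
    (k : ℕ) (f : AlternatingMap K n K (Fin k))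
    -- `f` is `𝔥`-invariant
    (hinv : ∀ x ∈ h, ∀ y : Fin k → n,
      ∑ i : Fin k, f (Function.update y i (hAct h n hc x (y i))) = 0) :
    -- `d_𝔫 f` is `𝔥`-invariant
    ∀ x ∈ h, ∀ y : Fin (k + 1) → n,
      ∑ i : Fin (k + 1),
        ceDiff K k (⇑f) (Function.update y i (hAct h n hc x (y i))) = 0 := by
  intro x hx y
  cases k with
  | zero => simp [ceDiff]
  | succ k =>
    rw [sum_ceDiff_update_hAct h n hc f (hinv x hx), Fin.sum_sum_ite_lt_add_swap]
    exact Finset.sum_eq_zero fun r _ => sum_crossTerm_succAbove_eq_zero h n hc f hinv x y r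
end

section
/- Let (𝔤, 𝔤*) be a Lie bialgebra and 𝔥 ⊆ 𝔤 a Lie subalgebra such that 𝔥^⊥ ⊆ 𝔤* is a Lie ideal of 𝔤*. Then within the double 𝔡, the bracket on 𝔥 + 𝔥^⊥ simplifies to [x+ξ, y+η] = [x,y] + [ξ,η] + ad*_x η − ad*_y ξ for x,y ∈ 𝔥, ξ,η ∈ 𝔥^⊥; in particular, 𝔥^⊥ is a Lie ideal of 𝔥 + 𝔥^⊥. -/
open Module

variable {K : Type*} [Field K] {g : Type*} [LieRing g] [LieAlgebra K g]

/-- The coadjoint action of `𝔤` on `𝔤* = Dual K g`: `⟨ad*_x ξ, y⟩ = −⟨ξ, [x,y]⟩`. -/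
noncomputable def coadG (K : Type*) [Field K] {g : Type*} [LieRing g] [LieAlgebra K g]
    (x : g) (ξ : Module.Dual K g) : Module.Dual K g :=
  - (ξ ∘ₗ (LieAlgebra.ad K g x))

/-- The bracket of the double `𝔡 = 𝔤 ⊕ 𝔤*`. -/
noncomputable def doubleBracket (K : Type*) [Field K] {g : Type*} [LieRing g] [LieAlgebra K g]
    [LieRing (Module.Dual K g)] [LieAlgebra K (Module.Dual K g)]
    (coadD : Module.Dual K g → g → g)
    (a b : g × Module.Dual K g) : g × Module.Dual K g :=
  (⁅a.1, b.1⁆ + coadD a.2 b.1 - coadD b.2 a.1,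
   ⁅a.2, b.2⁆ + coadG K a.1 b.2 - coadG K b.1 a.2)

/- STATEMENT 8: if `𝔥 ⊆ 𝔤` is a Lie subalgebra such that `𝔥^⊥` is a Lie ideal of `𝔤*`, then
on `𝔥 + 𝔥^⊥ ⊆ 𝔡` the double bracket simplifies to
`[x+ξ, y+η] = [x,y] + [ξ,η] + ad*_x η − ad*_y ξ` (the mixed coadjoint terms `ad*_ξ x` drop
out); in particular `𝔥^⊥` is a Lie ideal of `𝔥 + 𝔥^⊥`. -/
theorem double_bracket_simplifies_when_annihilator_is_ideal
    [FiniteDimensional K g]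
    [LieRing (Module.Dual K g)] [LieAlgebra K (Module.Dual K g)]
    (coadD : Module.Dual K g → g → g)
    (hcoadD : ∀ (ξ : Module.Dual K g) (x : g) (η : Module.Dual K g),
      η (coadD ξ x) = - (⁅ξ, η⁆ : Module.Dual K g) x)
    (hJac : ∀ a b c : g × Module.Dual K g,
      doubleBracket K coadD a (doubleBracket K coadD b c) =
        doubleBracket K coadD (doubleBracket K coadD a b) c +
          doubleBracket K coadD b (doubleBracket K coadD a c))
    (h : LieSubalgebra K g)
    -- `𝔥^⊥` is a Lie ideal of `𝔤*`
    (hideal : ∀ ξ ∈ Submodule.dualAnnihilator h.toSubmodule,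
      ∀ η : Module.Dual K g, (⁅η, ξ⁆ : Module.Dual K g) ∈
        Submodule.dualAnnihilator h.toSubmodule) :
    (∀ x ∈ h, ∀ y ∈ h,
      ∀ ξ ∈ Submodule.dualAnnihilator h.toSubmodule,
      ∀ η ∈ Submodule.dualAnnihilator h.toSubmodule,
        doubleBracket K coadD (x, ξ) (y, η) =
          (⁅x, y⁆, ⁅ξ, η⁆ + coadG K x η - coadG K y ξ))
    ∧ (∀ x ∈ h, ∀ ξ ∈ Submodule.dualAnnihilator h.toSubmodule,
        ∀ η ∈ Submodule.dualAnnihilator h.toSubmodule,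
          (doubleBracket K coadD (x, ξ) ((0 : g), η)).1 = 0 ∧
          (doubleBracket K coadD (x, ξ) ((0 : g), η)).2 ∈
            Submodule.dualAnnihilator h.toSubmodule) := by
  -- `coadD ζ` preserves `h` (double duality + `hideal`)
  have hinH : ∀ (ζ : Module.Dual K g), ∀ y ∈ h, coadD ζ y ∈ h.toSubmodule := by
    intro ζ y hy
    have hmem : coadD ζ y ∈ (h.toSubmodule.dualAnnihilator).dualCoannihilator := by
      rw [Submodule.mem_dualCoannihilator]
      intro φ hφ
      rw [hcoadD, neg_eq_zero]
      exact ((Submodule.mem_dualAnnihilator _).mp (hideal φ hφ ζ)) y hy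
    rwa [Subspace.dualAnnihilator_dualCoannihilator_eq] at hmem
  -- brackets with second argument in the annihilator vanish on `h`
  have braczero : ∀ (ζ : Module.Dual K g),
      ∀ ξ ∈ Submodule.dualAnnihilator h.toSubmodule, ∀ y ∈ h,
      (⁅ζ, ξ⁆ : Module.Dual K g) y = 0 := by
    intro ζ ξ hξ y hy
    have h1 : ξ (coadD ζ y) = 0 :=
      ((Submodule.mem_dualAnnihilator _).mp hξ) _ (hinH ζ y hy)
    have h2 := hcoadD ζ y ξ
    exact neg_eq_zero.mp (h2.symm.trans h1)
  -- the mixed coadjoint terms vanish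
  have hzero : ∀ ξ ∈ Submodule.dualAnnihilator h.toSubmodule, ∀ y ∈ h,
      coadD ξ y = 0 := by
    intro ξ hξ y hy
    rw [← Module.forall_dual_apply_eq_zero_iff K]
    intro η
    rw [hcoadD, neg_eq_zero, ← lie_skew,
      ← @neg_lie (Module.Dual K g) (Module.Dual K g) _ LieRing.toAddCommGroup
        lieRingSelfModule η ξ]
    exact braczero _ ξ hξ y hy
  -- `coadD ζ 0 = 0`
  have hzero0 : ∀ (ζ : Module.Dual K g), coadD ζ 0 = 0 := by
    intro ζ
    rw [← Module.forall_dual_apply_eq_zero_iff K]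
    intro η
    rw [hcoadD]
    simp
  -- `coadG x η` lies in the annihilator when `x ∈ h` and `η` annihilates `h`
  have hcoadG : ∀ x ∈ h, ∀ η ∈ Submodule.dualAnnihilator h.toSubmodule,
      coadG K x η ∈ Submodule.dualAnnihilator h.toSubmodule := by
    intro x hx η hη
    rw [Submodule.mem_dualAnnihilator]
    intro y hy
    have : η ⁅x, y⁆ = 0 :=
      ((Submodule.mem_dualAnnihilator _).mp hη) _ (h.lie_mem hx hy)
    simp [coadG, LieAlgebra.ad_apply, this]
  constructor
  · intro x hx y hy ξ hξ η hη
    simp [doubleBracket, hzero ξ hξ y hy, hzero η hη x hx]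
  · intro x hx ξ hξ η hη
    constructor
    · simp [doubleBracket, hzero0 ξ, hzero η hη x hx]
    · simp only [doubleBracket]
      have h1 : (⁅ξ, η⁆ : Module.Dual K g) ∈ Submodule.dualAnnihilator h.toSubmodule :=
        hideal η hη ξ
      have h2 := hcoadG x hx η hη
      have h3 : coadG K (0 : g) ξ = 0 := by simp [coadG]
      rw [h3]
      simpa using add_mem h1 h2
end

section
/- Let M and N be groupoids over a common base P forming a matched pair: there is a left action of M on t_N: N → P, (m,n) ↦ ᵐn, and a right action of N on M, (m,n) ↦ mⁿ, defined on M*N = {(m,n) : s_M(m) = t_N(n)}, satisfying s_N(ᵐn) = t_M(mⁿ), ᵐ(ε_N(s_M(m))) = ε_N(t_M(m)), (ε_M(t_N(n)))ⁿ = ε_M(s_N(n)), ᵐ(n₂n₁) = (ᵐn₂)(^{mⁿ²}n₁), and (m₂m₁)ⁿ = (m₂^{^{m₁}n})(m₁ⁿ). Then N*M = {(n,m) : s_N(n) = t_M(m)} with s(n,m) = s_M(m), t(n,m) = t_N(n), multiplication (n₁,m₁)(n₂,m₂) = (n₁·(^{m₁}n₂), (m₁^{n₂})·m₂) (defined when s_M(m₁)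 = t_N(n₂)), identities p ↦ (ε_N(p), ε_M(p)), is a groupoid over P. -/
/- STATEMENT 19: a matched pair of groupoids `M`, `N` over a base `P` (a left action of `M`
on `t_N : N → P` and a right action of `N` on `s_M : M → P`, defined on
`M*N = {(m,n) : s_M(m) = t_N(n)}` and satisfying the five compatibility conditions) gives
rise to a groupoid structure on `N*M = {(n,m) : s_N(n) = t_M(m)}` over `P` with
`s(n,m) = s_M(m)`, `t(n,m) = t_N(n)`, multiplication
`(n₁,m₁)(n₂,m₂) = (n₁·(ᵐ¹n₂), (m₁ⁿ²)·m₂)` and identities `p ↦ (ε_N(p), ε_M(p))`.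
Multiplication maps and actions are total functions; all axioms are asserted only on
composable/compatible tuples. -/
theorem matched_pair_of_groupoids_gives_groupoid
    {P M N : Type*}
    (sM tM : M → P) (mulM : M → M → M) (eM : P → M) (invM : M → M)
    (sN tN : N → P) (mulN : N → N → N) (eN : P → N) (invN : N → N)
    -- `M` is a groupoid over `P`
    (hMs : ∀ a b, sM a = tM b → sM (mulM a b) = sM b)
    (hMt : ∀ a b, sM a = tM b → tM (mulM a b) = tM a)
    (hMassoc : ∀ a b c, sM a = tM b → sM b = tM c →
      mulM (mulM a b) c = mulM a (mulM b c))
    (hMes : ∀ p, sM (eM p) = p) (hMet : ∀ p, tM (eM p) = p)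
    (hMel : ∀ a, mulM (eM (tM a)) a = a) (hMer : ∀ a, mulM a (eM (sM a)) = a)
    (hMis : ∀ a, sM (invM a) = tM a) (hMit : ∀ a, tM (invM a) = sM a)
    (hMinv₁ : ∀ a, mulM a (invM a) = eM (tM a))
    (hMinv₂ : ∀ a, mulM (invM a) a = eM (sM a))
    -- `N` is a groupoid over `P`
    (hNs : ∀ a b, sN a = tN b → sN (mulN a b) = sN b)
    (hNt : ∀ a b, sN a = tN b → tN (mulN a b) = tN a)
    (hNassoc : ∀ a b c, sN a = tN b → sN b = tN c →
      mulN (mulN a b) c = mulN a (mulN b c))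
    (hNes : ∀ p, sN (eN p) = p) (hNet : ∀ p, tN (eN p) = p)
    (hNel : ∀ a, mulN (eN (tN a)) a = a) (hNer : ∀ a, mulN a (eN (sN a)) = a)
    (hNis : ∀ a, sN (invN a) = tN a) (hNit : ∀ a, tN (invN a) = sN a)
    (hNinv₁ : ∀ a, mulN a (invN a) = eN (tN a))
    (hNinv₂ : ∀ a, mulN (invN a) a = eN (sN a))
    -- the left action of `M` on `t_N : N → P`, `(m,n) ↦ ᵐn`, defined when `s_M m = t_N n`
    (actN : M → N → N)
    (hactN_t : ∀ m n, sM m = tN n → tN (actN m n) = tM m)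
    (hactN_mul : ∀ m₂ m₁ n, sM m₂ = tM m₁ → sM m₁ = tN n →
      actN (mulM m₂ m₁) n = actN m₂ (actN m₁ n))
    (hactN_e : ∀ n, actN (eM (tN n)) n = n)
    -- the right action of `N` on `s_M : M → P`, `(m,n) ↦ mⁿ`, defined when `s_M m = t_N n`
    (actM : M → N → M)
    (hactM_s : ∀ m n, sM m = tN n → sM (actM m n) = sN n)
    (hactM_mul : ∀ m n₂ n₁, sM m = tN n₂ → sN n₂ = tN n₁ →
      actM m (mulN n₂ n₁) = actM (actM m n₂) n₁)
    (hactM_e : ∀ m, actM m (eN (sM m)) = m)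
    -- the five matched-pair compatibility conditions
    (c₁ : ∀ m n, sM m = tN n → sN (actN m n) = tM (actM m n))
    (c₂ : ∀ m, actN m (eN (sM m)) = eN (tM m))
    (c₃ : ∀ n, actM (eM (tN n)) n = eM (sN n))
    (c₄ : ∀ m n₂ n₁, sM m = tN n₂ → sN n₂ = tN n₁ →
      actN m (mulN n₂ n₁) = mulN (actN m n₂) (actN (actM m n₂) n₁))
    (c₅ : ∀ m₂ m₁ n, sM m₂ = tM m₁ → sM m₁ = tN n →
      actM (mulM m₂ m₁) n = mulM (actM m₂ (actN m₁ n)) (actM m₁ n)) :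
    -- `N*M` is a groupoid over `P`:
    -- closure and source/target of products
    (∀ n₁ m₁ n₂ m₂, sN n₁ = tM m₁ → sN n₂ = tM m₂ → sM m₁ = tN n₂ →
      sN (mulN n₁ (actN m₁ n₂)) = tM (mulM (actM m₁ n₂) m₂) ∧
      sM (mulM (actM m₁ n₂) m₂) = sM m₂ ∧
      tN (mulN n₁ (actN m₁ n₂)) = tN n₁)
    ∧
    -- associativity
    (∀ n₁ m₁ n₂ m₂ n₃ m₃,
      sN n₁ = tM m₁ → sN n₂ = tM m₂ → sN n₃ = tM m₃ →
      sM m₁ = tN n₂ → sM m₂ = tN n₃ →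
      (mulN (mulN n₁ (actN m₁ n₂)) (actN (mulM (actM m₁ n₂) m₂) n₃) =
        mulN n₁ (actN m₁ (mulN n₂ (actN m₂ n₃))) ∧
       mulM (actM (mulM (actM m₁ n₂) m₂) n₃) m₃ =
        mulM (actM m₁ (mulN n₂ (actN m₂ n₃))) (mulM (actM m₂ n₃) m₃)))
    ∧
    -- identities
    (∀ p, sN (eN p) = tM (eM p) ∧ sM (eM p) = p ∧ tN (eN p) = p)
    ∧
    (∀ n m, sN n = tM m →
      (mulN (eN (tN n)) (actN (eM (tN n)) n) = n ∧
       mulM (actM (eM (tN n)) n) m = m) ∧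
      (mulN n (actN m (eN (sM m))) = n ∧
       mulM (actM m (eN (sM m))) (eM (sM m)) = m))
    ∧
    -- inverses
    (∃ inv : N × M → N × M, ∀ n m, sN n = tM m →
      sN (inv (n, m)).1 = tM (inv (n, m)).2 ∧
      sM (inv (n, m)).2 = tN n ∧
      tN (inv (n, m)).1 = sM m ∧
      (mulN n (actN m (inv (n, m)).1) = eN (tN n) ∧
       mulM (actM m (inv (n, m)).1) (inv (n, m)).2 = eM (tN n)) ∧
      (mulN (inv (n, m)).1 (actN (inv (n, m)).2 n) = eN (sM m) ∧
       mulM (actM (inv (n, m)).2 n) m = eM (sM m))) := by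
  refine ⟨?_, ?_, ?_, ?_, ?_⟩
  · intro n₁ m₁ n₂ m₂ h₁ h₂ h₁₂
    have d1 : sN n₁ = tN (actN m₁ n₂) := by rw [hactN_t m₁ n₂ h₁₂, h₁]
    have d2 : sM (actM m₁ n₂) = tM m₂ := by rw [hactM_s m₁ n₂ h₁₂, h₂]
    refine ⟨?_, ?_, ?_⟩
    · rw [hNs _ _ d1, hMt _ _ d2, c₁ m₁ n₂ h₁₂]
    · exact hMs _ _ d2
    · exact hNt _ _ d1
  · intro n₁ m₁ n₂ m₂ n₃ m₃ h₁ h₂ h₃ h₁₂ h₂₃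
    have d1 : sN n₁ = tN (actN m₁ n₂) := by rw [hactN_t m₁ n₂ h₁₂, h₁]
    have d2 : sM (actM m₁ n₂) = tM m₂ := by rw [hactM_s m₁ n₂ h₁₂, h₂]
    have d3 : sN n₂ = tN (actN m₂ n₃) := by rw [hactN_t m₂ n₃ h₂₃, h₂]
    have d4 : sM (mulM (actM m₁ n₂) m₂) = tN n₃ := by rw [hMs _ _ d2, h₂₃]
    have d5 : sM m₁ = tN (mulN n₂ (actN m₂ n₃)) := by
      rw [hNt _ _ d3]; exact h₁₂
    have key1 : actN m₁ (mulN n₂ (actN m₂ n₃)) =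
        mulN (actN m₁ n₂) (actN (mulM (actM m₁ n₂) m₂) n₃) := by
      rw [c₄ m₁ n₂ (actN m₂ n₃) h₁₂ d3,
        hactN_mul (actM m₁ n₂) m₂ n₃ d2 h₂₃]
    have key2 : actM (mulM (actM m₁ n₂) m₂) n₃ =
        mulM (actM m₁ (mulN n₂ (actN m₂ n₃))) (actM m₂ n₃) := by
      rw [c₅ (actM m₁ n₂) m₂ n₃ d2 h₂₃,
        hactM_mul m₁ n₂ (actN m₂ n₃) h₁₂ d3]
    constructor
    · rw [key1]
      refine hNassoc _ _ _ d1 ?_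
      rw [hactN_t _ _ d4, hMt _ _ d2, c₁ m₁ n₂ h₁₂]
    · rw [key2]
      refine hMassoc _ _ _ ?_ ?_
      · rw [hactM_s m₁ _ d5, hNs _ _ d3, c₁ m₂ n₃ h₂₃]
      · rw [hactM_s m₂ n₃ h₂₃, h₃]
  · intro p
    exact ⟨by rw [hNes, hMet], hMes p, hNet p⟩
  · intro n m h
    constructor
    · constructor
      · rw [hactN_e n, hNel]
      · rw [c₃ n, h, hMel]
    · constructor
      · rw [c₂ m, ← h, hNer]
      · rw [hactM_e m, hMer]
  · refine ⟨fun nm => (actN (invM nm.2) (invN nm.1), actM (invM nm.2) (invN nm.1)), ?_⟩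
    intro n m h
    simp only
    have d0 : sM (invM m) = tN (invN n) := by rw [hMis, hNit, h]
    have hn' : tN (actN (invM m) (invN n)) = sM m := by rw [hactN_t _ _ d0, hMit]
    have hm's : sM (actM (invM m) (invN n)) = tN n := by rw [hactM_s _ _ d0, hNis]
    have e1 : actN m (actN (invM m) (invN n)) = invN n := by
      rw [← hactN_mul m (invM m) (invN n) (hMit m).symm d0, hMinv₁,
        ← h, ← hNit n, hactN_e]
    have dmn' : sM m = tN (actN (invM m) (invN n)) := hn'.symm
    have e2 : mulM (actM m (actN (invM m) (invN n))) (actM (invM m) (invN n)) =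
        eM (tN n) := by
      rw [← c₅ m (invM m) (invN n) (hMit m).symm d0, hMinv₁, ← h, ← hNit n, c₃, hNis]
    have e3 : mulN (actN (invM m) (invN n)) (actN (actM (invM m) (invN n)) n) =
        eN (sM m) := by
      rw [← c₄ (invM m) (invN n) n d0 (hNis n), hNinv₂, h, ← hMis m, c₂, hMit]
    have e4 : actM (actM (invM m) (invN n)) n = invM m := by
      rw [← hactM_mul (invM m) (invN n) n d0 (hNis n), hNinv₂, h, ← hMis m, hactM_e]
    refine ⟨c₁ _ _ d0, hm's, hn', ⟨?_, ?_⟩, ?_, ?_⟩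
    · rw [e1, hNinv₁]
    · exact e2
    · exact e3
    · rw [e4, hMinv₂]
end
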